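/- arXiv:1706.02212 — 2 statements merged into one kernel-verified Lean document; each statement's English description precedes it below -/
import Mathlib

section
/- Let d ≥ 1, σ a state on ℂ^d, ε ∈ (0,1], and let τ := (1/d)·I be the completely mixed state. Then the majorization-minimal state ρ*_ε(σ) saturates the triangle inequality between σ and τ: (1/2)‖σ − τ‖₁ = (1/2)‖τ − ρ*_ε(σ)‖₁ + (1/2)‖ρ*_ε(σ) − σ‖₁. -/
open scoped BigOperators ComplexOrder

noncomputable section

/-- A quantum state on `ℂ^d`: a positive semidefinite `d × d` complex matrix of trace 1. -/
def MState (d : ℕ) : Type :=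
  {m : Matrix (Fin d) (Fin d) ℂ // m.PosSemidef ∧ m.trace = 1}

/-- Eigenvalues of a matrix (junk value `0` if the matrix is not Hermitian). -/
noncomputable def eigs {d : ℕ} (A : Matrix (Fin d) (Fin d) ℂ) : Fin d → ℝ :=
  if h : A.IsHermitian then h.eigenvalues else 0

/-- The trace norm of a Hermitian matrix: the sum of the absolute values of its eigenvalues. -/
noncomputable def traceNorm {d : ℕ} (A : Matrix (Fin d) (Fin d) ℂ) : ℝ :=
  ∑ i, |eigs A i|

/-- Membership in the ε-ball (in trace distance) around the state `σ`:
`ω ∈ B_ε(σ) ↔ (1/2)‖ω − σ‖₁ ≤ ε`. -/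
def inBall {d : ℕ} (ε : ℝ) (σ ω : MState d) : Prop :=
  (1 / 2 : ℝ) * traceNorm (ω.1 - σ.1) ≤ ε

/-- Sum of the `k` largest entries of a vector (counted with multiplicity). -/
noncomputable def kMaxSum {d : ℕ} (v : Fin d → ℝ) (k : ℕ) : ℝ :=
  sSup ((fun s : Finset (Fin d) => ∑ i ∈ s, v i) '' {s | s.card = k})

/-- Vector majorization `x ≺ y`: for each `k = 1, …, d` the sum of the `k` largest entries of
`x` is at most that of `y`, with equality at `k = d`. -/
def vMaj {d : ℕ} (x y : Fin d → ℝ) : Prop :=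
  (∀ k, 1 ≤ k → k ≤ d → kMaxSum x k ≤ kMaxSum y k) ∧ kMaxSum x d = kMaxSum y d

/-- State majorization `ρ ≺ σ` (majorization of the eigenvalue vectors). -/
def Maj {d : ℕ} (ρ σ : MState d) : Prop :=
  vMaj (eigs ρ.1) (eigs σ.1)

/-- Two states are unitarily equivalent iff they have the same eigenvalues with the same
multiplicities. -/
def UnitarilyEquiv {d : ℕ} (ρ σ : MState d) : Prop :=
  ∃ π : Equiv.Perm (Fin d), eigs ρ.1 = eigs σ.1 ∘ π

/-- The von Neumann entropy (base 2): the Shannon entropy of the eigenvalues. -/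
noncomputable def vnEnt {d : ℕ} (ρ : MState d) : ℝ :=
  -∑ i, eigs ρ.1 i * Real.logb 2 (eigs ρ.1 i)

/-- The completely mixed state matrix `(1/d)·I`. -/
noncomputable def mixedMat (d : ℕ) : Matrix (Fin d) (Fin d) ℂ :=
  ((d : ℂ)⁻¹) • 1

/-- `ρ` is the majorization-minimal state `ρ*_ε(σ)` of the ε-ball around `σ`:
`ρ ∈ B_ε(σ)` and `ρ ≺ ω` for every `ω ∈ B_ε(σ)`. -/
def IsMinState {d : ℕ} (ε : ℝ) (σ ρ : MState d) : Prop :=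
  inBall ε σ ρ ∧ ∀ ω : MState d, inBall ε σ ω → Maj ρ ω

/-!
Write `D = ½‖σ − τ‖₁`. For `t ∈ [0, 1]` with `t D ≤ ε` the state `ω = (1 − t) σ + t τ` lies in
`B_ε(σ)`, so `ρ ≺ ω`. Since `½‖X − τ‖₁ = ∑ᵢ (λᵢ(X) − 1/d)₊` is monotone under majorization,
`½‖ρ − τ‖₁ ≤ ½‖ω − τ‖₁ = (1 − t) D`. With `t = ε / D` (or `t = 1` when `D ≤ ε`) this, together
with `½‖ρ − σ‖₁ ≤ ε`, bounds `½‖τ − ρ‖₁ + ½‖ρ − σ‖₁` by `D`; the reverse inequality is the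
triangle inequality for the trace norm, which follows from `‖A‖₁ = max {Re tr (S A) : −1 ≤ S ≤ 1}`.
-/

open Matrix Unitary Polynomial

variable {d : ℕ}

lemma eigs_of_isHermitian {A : Matrix (Fin d) (Fin d) ℂ} (hA : A.IsHermitian) :
    eigs A = hA.eigenvalues := dif_pos hA

lemma isHermitian_conj_diagonal (U : unitaryGroup (Fin d) ℂ) (v : Fin d → ℝ) :
    (conjStarAlgAut ℂ _ U (diagonal (RCLike.ofReal ∘ v))).IsHermitian := by
  rw [conjStarAlgAut_apply, star_eq_conjTranspose]
  refine isHermitian_mul_mul_conjTranspose _ (isHermitian_diagonal_of_self_adjoint _ ?_)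
  ext i
  simp

lemma charpoly_conj_diagonal (U : unitaryGroup (Fin d) ℂ) (v : Fin d → ℝ) :
    (conjStarAlgAut ℂ _ U (diagonal (RCLike.ofReal ∘ v))).charpoly = ∏ i, (X - C (v i : ℂ)) := by
  rw [conjStarAlgAut_apply, charpoly_mul_comm, ← mul_assoc]
  simp [charpoly_diagonal]

lemma sum_eigs_conj_diagonal (U : unitaryGroup (Fin d) ℂ) (v : Fin d → ℝ) (g : ℝ → ℝ) :
    ∑ i, g (eigs (conjStarAlgAut ℂ _ U (diagonal (RCLike.ofReal ∘ v))) i) = ∑ i, g (v i) := by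
  have hA := isHermitian_conj_diagonal U v
  have hroots := hA.roots_charpoly_eq_eigenvalues
  rw [charpoly_conj_diagonal, roots_prod _ _ (by simp [Finset.prod_ne_zero_iff, X_sub_C_ne_zero])]
    at hroots
  simp only [roots_X_sub_C, Multiset.bind_singleton] at hroots
  have := congrArg (fun m => (Multiset.map (g ∘ RCLike.re) m).sum) hroots
  rw [eigs_of_isHermitian hA]
  simpa [Multiset.map_map, Function.comp_def, Finset.sum] using this.symm

lemma Matrix.IsHermitian.exists_eq_conj_diagonal_eigs {A : Matrix (Fin d) (Fin d) ℂ}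
    (hA : A.IsHermitian) :
    ∃ U : unitaryGroup (Fin d) ℂ, A = conjStarAlgAut ℂ _ U (diagonal (RCLike.ofReal ∘ eigs A)) :=
  ⟨_, eigs_of_isHermitian hA ▸ hA.spectral_theorem⟩

lemma traceNorm_conj_diagonal (U : unitaryGroup (Fin d) ℂ) (v : Fin d → ℝ) :
    traceNorm (conjStarAlgAut ℂ _ U (diagonal (RCLike.ofReal ∘ v))) = ∑ i, |v i| :=
  sum_eigs_conj_diagonal U v abs

lemma traceNorm_nonneg (A : Matrix (Fin d) (Fin d) ℂ) : 0 ≤ traceNorm A :=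
  Finset.sum_nonneg fun _ _ => abs_nonneg _

lemma Matrix.IsHermitian.traceNorm_smul {A : Matrix (Fin d) (Fin d) ℂ} (hA : A.IsHermitian)
    (c : ℝ) : traceNorm (c • A) = |c| * traceNorm A := by
  obtain ⟨U, hU⟩ := hA.exists_eq_conj_diagonal_eigs
  have h : c • A = conjStarAlgAut ℂ _ U (diagonal (RCLike.ofReal ∘ fun i => c * eigs A i)) := by
    conv_lhs => rw [hU]
    rw [RCLike.real_smul_eq_coe_smul (K := ℂ), ← map_smul, ← diagonal_smul]
    congr 2
    ext i
    simp
  rw [h, traceNorm_conj_diagonal, traceNorm, Finset.mul_sum]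
  simp_rw [abs_mul]

lemma Matrix.IsHermitian.traceNorm_sub_smul_one {A : Matrix (Fin d) (Fin d) ℂ}
    (hA : A.IsHermitian) (c : ℝ) : traceNorm (A - c • 1) = ∑ i, |eigs A i - c| := by
  obtain ⟨U, hU⟩ := hA.exists_eq_conj_diagonal_eigs
  have h : A - c • 1 = conjStarAlgAut ℂ _ U (diagonal (RCLike.ofReal ∘ fun i => eigs A i - c)) := by
    conv_lhs => rw [hU]
    rw [RCLike.real_smul_eq_coe_smul (K := ℂ), ← map_one (conjStarAlgAut ℂ _ U),
      ← map_smul, ← map_sub]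
    congr 1
    ext i j
    rcases eq_or_ne i j with rfl | hij
    · simp
    · simp [hij]
  rw [h, traceNorm_conj_diagonal]

lemma traceNorm_sub_comm {A B : Matrix (Fin d) (Fin d) ℂ} (hA : A.IsHermitian)
    (hB : B.IsHermitian) : traceNorm (A - B) = traceNorm (B - A) := by
  rw [← neg_sub B A, ← neg_one_smul ℝ (B - A), (hB.sub hA).traceNorm_smul, abs_neg, abs_one,
    one_mul]

lemma trace_mul_conjStarAlgAut (U : unitaryGroup (Fin d) ℂ) (S D : Matrix (Fin d) (Fin d) ℂ) :
    (S * conjStarAlgAut ℂ _ U D).trace = (conjStarAlgAut ℂ _ (star U) S * D).trace := by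
  simp only [conjStarAlgAut_apply, Unitary.coe_star, star_star, ← mul_assoc]
  rw [trace_mul_comm, ← mul_assoc, ← mul_assoc]

lemma re_trace_mul_diagonal_le {Q : Matrix (Fin d) (Fin d) ℂ} (hQ₁ : (1 - Q).PosSemidef)
    (hQ₂ : (1 + Q).PosSemidef) (v : Fin d → ℝ) :
    (Q * diagonal (RCLike.ofReal ∘ v)).trace.re ≤ ∑ i, |v i| := by
  simp only [trace, diag_apply, mul_diagonal, Complex.re_sum]
  refine Finset.sum_le_sum fun i _ => ?_
  have h₁ := (Complex.nonneg_iff.mp (hQ₁.diag_nonneg (i := i))).1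
  have h₂ := (Complex.nonneg_iff.mp (hQ₂.diag_nonneg (i := i))).1
  simp only [Matrix.sub_apply, Matrix.add_apply, one_apply_eq, Complex.sub_re, Complex.add_re,
    Complex.one_re] at h₁ h₂
  simp only [Function.comp_apply, Complex.coe_algebraMap, Complex.mul_re, Complex.ofReal_re,
    Complex.ofReal_im, mul_zero, sub_zero]
  calc (Q i i).re * v i ≤ |(Q i i).re * v i| := le_abs_self _
    _ = |(Q i i).re| * |v i| := abs_mul _ _
    _ ≤ 1 * |v i| := by gcongr; exact abs_le.mpr ⟨by linarith, by linarith⟩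
    _ = |v i| := one_mul _

lemma Matrix.IsHermitian.re_trace_mul_le_traceNorm {A S : Matrix (Fin d) (Fin d) ℂ}
    (hA : A.IsHermitian) (hS₁ : (1 - S).PosSemidef) (hS₂ : (1 + S).PosSemidef) :
    (S * A).trace.re ≤ traceNorm A := by
  obtain ⟨U, hU⟩ := hA.exists_eq_conj_diagonal_eigs
  have hconj : ∀ {X : Matrix (Fin d) (Fin d) ℂ}, X.PosSemidef →
      (conjStarAlgAut ℂ _ (star U) X).PosSemidef := fun hX => by
    simpa [conjStarAlgAut_star_apply, star_eq_conjTranspose] using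
      hX.conjTranspose_mul_mul_same (U : Matrix (Fin d) (Fin d) ℂ)
  conv_lhs => rw [hU, trace_mul_conjStarAlgAut]
  refine re_trace_mul_diagonal_le ?_ ?_ (eigs A)
  · simpa only [map_sub, map_one] using hconj hS₁
  · simpa only [map_add, map_one] using hconj hS₂

lemma posSemidef_conj_diagonal (U : unitaryGroup (Fin d) ℂ) {v : Fin d → ℝ} (hv : ∀ i, 0 ≤ v i) :
    (conjStarAlgAut ℂ _ U (diagonal (RCLike.ofReal ∘ v))).PosSemidef := by
  rw [conjStarAlgAut_apply, star_eq_conjTranspose]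
  exact (posSemidef_diagonal_iff.mpr fun i => by simpa using hv i).mul_mul_conjTranspose_same _

lemma one_add_smul_conj_diagonal (U : unitaryGroup (Fin d) ℂ) (c : ℝ) (v : Fin d → ℝ) :
    1 + c • conjStarAlgAut ℂ _ U (diagonal (RCLike.ofReal ∘ v)) =
      conjStarAlgAut ℂ _ U (diagonal (RCLike.ofReal ∘ fun i => 1 + c * v i)) := by
  rw [← map_one (conjStarAlgAut ℂ _ U), RCLike.real_smul_eq_coe_smul (K := ℂ), ← map_smul,
    ← map_add]
  congr 1
  ext i j
  rcases eq_or_ne i j with rfl | hij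
  · simp
  · simp [hij]

lemma Matrix.IsHermitian.exists_re_trace_mul_eq_traceNorm {A : Matrix (Fin d) (Fin d) ℂ}
    (hA : A.IsHermitian) :
    ∃ S : Matrix (Fin d) (Fin d) ℂ, (1 - S).PosSemidef ∧ (1 + S).PosSemidef ∧
      (S * A).trace.re = traceNorm A := by
  obtain ⟨U, hU⟩ := hA.exists_eq_conj_diagonal_eigs
  set s : Fin d → ℝ := fun i => if 0 ≤ eigs A i then 1 else -1
  refine ⟨conjStarAlgAut ℂ _ U (diagonal (RCLike.ofReal ∘ s)), ?_, ?_, ?_⟩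
  · rw [sub_eq_add_neg, ← neg_one_smul ℝ, one_add_smul_conj_diagonal]
    exact posSemidef_conj_diagonal _ fun i => by simp only [s]; split_ifs <;> norm_num
  · rw [← one_smul ℝ (conjStarAlgAut ℂ _ U _), one_add_smul_conj_diagonal]
    exact posSemidef_conj_diagonal _ fun i => by simp only [s]; split_ifs <;> norm_num
  · conv_lhs => rw [hU, trace_mul_conjStarAlgAut]
    rw [← conjStarAlgAut_mul_apply]
    simp only [star_mul_self, map_one, Complex.coe_algebraMap, StarAlgEquiv.one_apply,
      diagonal_mul_diagonal, Function.comp_apply, trace_diagonal, Complex.re_sum, Complex.mul_re,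
      Complex.ofReal_re, Complex.ofReal_im, mul_zero, sub_zero, traceNorm]
    refine Finset.sum_congr rfl fun i _ => ?_
    simp only [s]
    split_ifs with h
    · rw [one_mul, abs_of_nonneg h]
    · rw [neg_one_mul, abs_of_neg (not_le.mp h)]

lemma Matrix.IsHermitian.traceNorm_add_le {A B : Matrix (Fin d) (Fin d) ℂ} (hA : A.IsHermitian)
    (hB : B.IsHermitian) : traceNorm (A + B) ≤ traceNorm A + traceNorm B := by
  obtain ⟨S, hS₁, hS₂, hS⟩ := (hA.add hB).exists_re_trace_mul_eq_traceNorm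
  rw [← hS, mul_add, trace_add, Complex.add_re]
  exact add_le_add (hA.re_trace_mul_le_traceNorm hS₁ hS₂) (hB.re_trace_mul_le_traceNorm hS₁ hS₂)

lemma traceNorm_sub_le {A B C : Matrix (Fin d) (Fin d) ℂ} (hA : A.IsHermitian)
    (hB : B.IsHermitian) (hC : C.IsHermitian) :
    traceNorm (A - C) ≤ traceNorm (A - B) + traceNorm (B - C) := by
  simpa using (hA.sub hB).traceNorm_add_le (hB.sub hC)

lemma Finset.sum_abs_eq_two_mul_sum_max_zero {ι : Type*} (s : Finset ι) (f : ι → ℝ)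
    (hf : ∑ i ∈ s, f i = 0) : ∑ i ∈ s, |f i| = 2 * ∑ i ∈ s, max (f i) 0 := by
  have habs : ∀ x : ℝ, |x| = 2 * max x 0 - x := fun x => by
    rcases le_total 0 x with h | h
    · rw [abs_of_nonneg h, max_eq_left h]; ring
    · rw [abs_of_nonpos h, max_eq_right h]; ring
  simp only [habs, Finset.sum_sub_distrib, hf, sub_zero, Finset.mul_sum]

lemma mixedMat_eq_smul_one (d : ℕ) : mixedMat d = ((d : ℝ)⁻¹) • 1 := by
  rw [mixedMat, RCLike.real_smul_eq_coe_smul (K := ℂ)]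
  push_cast
  rfl

lemma posSemidef_mixedMat (d : ℕ) : (mixedMat d).PosSemidef := by
  rw [mixedMat_eq_smul_one]
  exact PosSemidef.one.smul (by positivity)

lemma isHermitian_mixedMat (d : ℕ) : (mixedMat d).IsHermitian :=
  (posSemidef_mixedMat d).isHermitian

namespace MState

lemma isHermitian (X : MState d) : X.1.IsHermitian := X.2.1.isHermitian

lemma dim_ne_zero (X : MState d) : d ≠ 0 := by
  rintro rfl
  simpa using X.2.2

lemma sum_eigs (X : MState d) : ∑ i, eigs X.1 i = 1 := by
  have h := X.isHermitian.trace_eq_sum_eigenvalues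
  rw [X.2.2, ← eigs_of_isHermitian X.isHermitian] at h
  apply Complex.ofReal_injective
  simpa using h.symm

def mixedState (hd : d ≠ 0) : MState d :=
  ⟨mixedMat d, posSemidef_mixedMat d, by simp [mixedMat, hd]⟩

def mix (t : ℝ) (ht₀ : 0 ≤ t) (ht₁ : t ≤ 1) (X Y : MState d) : MState d :=
  ⟨(1 - t) • X.1 + t • Y.1, (X.2.1.smul (sub_nonneg.mpr ht₁)).add (Y.2.1.smul ht₀), by
    simp [trace_add, trace_smul, X.2.2, Y.2.2]⟩

end MState

lemma half_traceNorm_sub_mixedMat (X : MState d) :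
    (1 / 2 : ℝ) * traceNorm (X.1 - mixedMat d) = ∑ i, max (eigs X.1 i - (d : ℝ)⁻¹) 0 := by
  rw [mixedMat_eq_smul_one, X.isHermitian.traceNorm_sub_smul_one,
    Finset.sum_abs_eq_two_mul_sum_max_zero]
  · ring
  · simp [Finset.sum_sub_distrib, X.sum_eigs, X.dim_ne_zero]

lemma sum_le_kMaxSum (v : Fin d → ℝ) (s : Finset (Fin d)) : ∑ i ∈ s, v i ≤ kMaxSum v s.card :=
  le_csSup ((Set.toFinite _).image _).bddAbove ⟨s, rfl, rfl⟩

lemma kMaxSum_le {v : Fin d → ℝ} {k : ℕ} (hk : k ≤ d) {c : ℝ}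
    (h : ∀ s : Finset (Fin d), s.card = k → ∑ i ∈ s, v i ≤ c) : kMaxSum v k ≤ c := by
  obtain ⟨s, -, hs⟩ :=
    Finset.exists_subset_card_eq (s := (Finset.univ : Finset (Fin d))) (by simpa using hk)
  refine csSup_le ⟨_, s, hs, rfl⟩ ?_
  rintro _ ⟨t, ht, rfl⟩
  exact h t ht

lemma kMaxSum_zero (v : Fin d → ℝ) : kMaxSum v 0 = 0 :=
  le_antisymm (kMaxSum_le (Nat.zero_le d) fun s hs => by simp [Finset.card_eq_zero.mp hs])
    (by simpa using sum_le_kMaxSum v ∅)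

lemma vMaj.kMaxSum_le {v w : Fin d → ℝ} (h : vMaj v w) {k : ℕ} (hk : k ≤ d) :
    kMaxSum v k ≤ kMaxSum w k := by
  rcases Nat.eq_zero_or_pos k with rfl | hk₀
  · rw [kMaxSum_zero, kMaxSum_zero]
  · exact h.1 k hk₀ hk

lemma kMaxSum_sub_le_sum_max (v : Fin d → ℝ) (c : ℝ) {k : ℕ} (hk : k ≤ d) :
    kMaxSum v k - k * c ≤ ∑ i, max (v i - c) 0 := by
  refine sub_le_iff_le_add'.mpr (kMaxSum_le hk fun s hs => ?_)
  calc ∑ i ∈ s, v i = k * c + ∑ i ∈ s, (v i - c) := by simp [Finset.sum_sub_distrib, hs]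
    _ ≤ k * c + ∑ i ∈ s, max (v i - c) 0 := by gcongr; exact le_max_left _ _
    _ ≤ k * c + ∑ i, max (v i - c) 0 := by
      gcongr
      exact s.subset_univ

lemma exists_sum_max_sub_le_kMaxSum (v : Fin d → ℝ) (c : ℝ) :
    ∃ k ≤ d, ∑ i, max (v i - c) 0 ≤ kMaxSum v k - k * c := by
  set s := Finset.univ.filter fun i => c < v i
  refine ⟨s.card, by simpa using s.card_le_univ, ?_⟩
  calc ∑ i, max (v i - c) 0 = ∑ i ∈ s, (v i - c) := by
        rw [Finset.sum_filter]
        refine Finset.sum_congr rfl fun i _ => ?_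
        split_ifs with h
        · exact max_eq_left (sub_nonneg.mpr h.le)
        · exact max_eq_right (sub_nonpos.mpr (not_lt.mp h))
    _ = ∑ i ∈ s, v i - s.card * c := by simp [Finset.sum_sub_distrib]
    _ ≤ kMaxSum v s.card - s.card * c := by gcongr; exact sum_le_kMaxSum v s

lemma vMaj.sum_max_sub_le {v w : Fin d → ℝ} (h : vMaj v w) (c : ℝ) :
    ∑ i, max (v i - c) 0 ≤ ∑ i, max (w i - c) 0 := by
  obtain ⟨k, hk, hv⟩ := exists_sum_max_sub_le_kMaxSum v c
  linarith [h.kMaxSum_le hk, kMaxSum_sub_le_sum_max w c hk]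

lemma Maj.half_traceNorm_sub_mixedMat_le {ρ ω : MState d} (h : Maj ρ ω) :
    (1 / 2 : ℝ) * traceNorm (ρ.1 - mixedMat d) ≤ (1 / 2 : ℝ) * traceNorm (ω.1 - mixedMat d) := by
  rw [half_traceNorm_sub_mixedMat, half_traceNorm_sub_mixedMat]
  exact vMaj.sum_max_sub_le h _

lemma IsMinState.half_traceNorm_sub_mixedMat_le {ε : ℝ} {σ ρ : MState d}
    (hρ : IsMinState ε σ ρ) {t : ℝ} (ht₀ : 0 ≤ t) (ht₁ : t ≤ 1)
    (htε : t * ((1 / 2 : ℝ) * traceNorm (σ.1 - mixedMat d)) ≤ ε) :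
    (1 / 2 : ℝ) * traceNorm (ρ.1 - mixedMat d) ≤
      (1 - t) * ((1 / 2 : ℝ) * traceNorm (σ.1 - mixedMat d)) := by
  set ω := MState.mix t ht₀ ht₁ σ (MState.mixedState σ.dim_ne_zero)
  have hστ := σ.isHermitian.sub (isHermitian_mixedMat d)
  have hωσ : ω.1 - σ.1 = (-t) • (σ.1 - mixedMat d) := by
    simp only [ω, MState.mix, MState.mixedState]
    module
  have hωτ : ω.1 - mixedMat d = (1 - t) • (σ.1 - mixedMat d) := by
    simp only [ω, MState.mix, MState.mixedState]
    module
  have hω : inBall ε σ ω := by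
    rw [inBall, hωσ, hστ.traceNorm_smul, abs_neg, abs_of_nonneg ht₀]
    linarith
  calc (1 / 2 : ℝ) * traceNorm (ρ.1 - mixedMat d)
      ≤ (1 / 2 : ℝ) * traceNorm (ω.1 - mixedMat d) := (hρ.2 ω hω).half_traceNorm_sub_mixedMat_le
    _ = (1 - t) * ((1 / 2 : ℝ) * traceNorm (σ.1 - mixedMat d)) := by
      rw [hωτ, hστ.traceNorm_smul, abs_of_nonneg (sub_nonneg.mpr ht₁)]
      ring

theorem minState_saturates_triangle_general
    {d : ℕ} (σ : MState d) (ε : ℝ)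
    (ρ : MState d) (hρ : IsMinState ε σ ρ) :
    (1 / 2 : ℝ) * traceNorm (σ.1 - mixedMat d) =
      (1 / 2 : ℝ) * traceNorm (mixedMat d - ρ.1) +
      (1 / 2 : ℝ) * traceNorm (ρ.1 - σ.1) := by
  have hσ := σ.isHermitian
  have hρ' := ρ.isHermitian
  have hτ := isHermitian_mixedMat d
  have hρσ : (1 / 2 : ℝ) * traceNorm (ρ.1 - σ.1) ≤ ε := hρ.1
  have hρσ₀ := traceNorm_nonneg (ρ.1 - σ.1)
  have hστ := traceNorm_sub_le hσ hρ' hτ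
  have hρσ_le := traceNorm_sub_le hρ' hτ hσ
  rw [traceNorm_sub_comm hσ hρ'] at hστ
  rw [traceNorm_sub_comm hτ hσ] at hρσ_le
  rw [traceNorm_sub_comm hτ hρ']
  set D := (1 / 2 : ℝ) * traceNorm (σ.1 - mixedMat d) with hD
  refine le_antisymm (by linarith) ?_
  rcases le_or_gt D ε with hDε | hεD
  · linarith [hρ.half_traceNorm_sub_mixedMat_le zero_le_one le_rfl (by linarith)]
  · have hD₀ : 0 < D := by linarith
    have h := hρ.half_traceNorm_sub_mixedMat_le (div_nonneg (by linarith) hD₀.le)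
      ((div_le_one hD₀).mpr hεD.le) (div_mul_cancel₀ ε hD₀.ne').le
    rw [sub_mul, div_mul_cancel₀ ε hD₀.ne'] at h
    linarith

/-- `ρ*_ε(σ)` saturates the triangle inequality between `σ` and the
completely mixed state `τ = (1/d)·I`. -/
theorem minState_saturates_triangle
    {d : ℕ} (hd : 1 ≤ d) (σ : MState d) (ε : ℝ) (hε : ε ∈ Set.Ioc (0 : ℝ) 1)
    (ρ : MState d) (hρ : IsMinState ε σ ρ) :
    (1 / 2 : ℝ) * traceNorm (σ.1 - mixedMat d) =
      (1 / 2 : ℝ) * traceNorm (mixedMat d - ρ.1) +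
      (1 / 2 : ℝ) * traceNorm (ρ.1 - σ.1) :=
  minState_saturates_triangle_general σ ε ρ hρ
end
end

section
/- Let ε > 0 and let Δ be a d×d Hermitian matrix with tr(Δ) = 0 and (1/2)‖Δ‖₁ ≤ ε, and let L be a d×d Hermitian matrix. Then tr(LΔ) ≤ ε (λ₊(L) − λ₋(L)), where λ₊(L) and λ₋(L) are the largest and smallest eigenvalues of L. Moreover, equality holds if and only if both of the following hold: (1) either (1/2)‖Δ‖₁ = ε or L is a real multiple of the identity; and (2) π₊ L π₊ = λ₊(L) π₊ and π₋ L π₋ = λ₋(L) π₋, where Δ = Δ₊ − Δ₋ is the Jordan decomposition of Δ into its positive and negative parts and π₊, π₋ are the orthogonal projections onto the supports (ranges) of Δ₊ and Δ₋ respectively. -/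
open scoped BigOperators ComplexOrder

noncomputable section

/-- The largest eigenvalue `λ₊` of a Hermitian matrix. -/
noncomputable def lamMax {d : ℕ} (A : Matrix (Fin d) (Fin d) ℂ) : ℝ :=
  ⨆ i, eigs A i

/-- The smallest eigenvalue `λ₋` of a Hermitian matrix. -/
noncomputable def lamMin {d : ℕ} (A : Matrix (Fin d) (Fin d) ℂ) : ℝ :=
  ⨅ i, eigs A i

/-- `P` is the orthogonal projection onto the support (range) of the Hermitian matrix `A`:
`P` is a Hermitian idempotent which acts as the identity on the range of `A` and vanishes on
its kernel. -/
def IsSupportProj {d : ℕ} (P A : Matrix (Fin d) (Fin d) ℂ) : Prop :=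
  P.IsHermitian ∧ P * P = P ∧ P * A = A ∧
    ∀ x : Fin d → ℂ, A.mulVec x = 0 → P.mulVec x = 0

/-!
Put `t = tr Δ₊ = tr Δ₋ = ½‖Δ‖₁ ≤ ε`. Since `λ₋ ≤ L ≤ λ₊` in the Loewner order,
`tr(L Δ₊) ≤ λ₊ t` and `tr(L Δ₋) ≥ λ₋ t`, hence `tr(L Δ) ≤ t (λ₊ - λ₋) ≤ ε (λ₊ - λ₋)`.
The first two bounds are equalities iff `tr((λ₊ - L) Δ₊) = 0` and `tr((L - λ₋) Δ₋) = 0`; for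
positive semidefinite `M` and `ρ`, `tr(M ρ) = 0` iff `M ρ = 0` iff `π M π = 0`, where `π` is the
support projection of `ρ`. The last bound is an equality iff `t = ε` or `λ₊ = λ₋`, and `λ₊ = λ₋`
means exactly that `L` is scalar.
-/

lemma sub_le_mul_sub_and_eq_iff {a b t ε M m : ℝ} (ha : a ≤ M * t) (hb : m * t ≤ b)
    (ht : t ≤ ε) (hmM : m ≤ M) :
    a - b ≤ ε * (M - m) ∧
      (a - b = ε * (M - m) ↔ (t = ε ∨ M = m) ∧ a = M * t ∧ b = m * t) := by
  -- `ε (M - m) - (a - b) = (M t - a) + (b - m t) + (ε - t) (M - m)`, a sum of nonnegative terms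
  have hgap : 0 ≤ (ε - t) * (M - m) := mul_nonneg (sub_nonneg.2 ht) (sub_nonneg.2 hmM)
  refine ⟨by linarith, fun h => ?_, fun ⟨hcase, hae, hbe⟩ => ?_⟩
  · refine ⟨?_, by linarith, by linarith⟩
    rcases mul_eq_zero.mp (show (ε - t) * (M - m) = 0 by linarith) with h' | h'
    · exact .inl (by linarith)
    · exact .inr (by linarith)
  · rw [hae, hbe]
    rcases hcase with h' | h'
    · rw [h']; ring
    · rw [h']; ring

open scoped MatrixOrder

namespace Matrix

variable {𝕜 n : Type*} [RCLike 𝕜] [Fintype n] [DecidableEq n]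

lemma algebraMap_real_eq_smul_one (r : ℝ) : algebraMap ℝ (Matrix n n ℂ) r = (r : ℂ) • 1 := by
  rw [Algebra.algebraMap_eq_smul_one, ← Complex.coe_smul]

lemma IsHermitian.trace_cfc {A : Matrix n n 𝕜} (hA : A.IsHermitian) (f : ℝ → ℝ) :
    (cfc f A).trace = ∑ i, (f (hA.eigenvalues i) : 𝕜) := by
  rw [hA.cfc_eq, IsHermitian.cfc, Unitary.conjStarAlgAut_apply, trace_mul_cycle,
    Unitary.coe_star_mul_self, one_mul, trace_diagonal]
  rfl

lemma IsHermitian.exists_mul_mul_eq_self {A : Matrix n n 𝕜} (hA : A.IsHermitian) :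
    ∃ G, A * G * A = A := by
  have hcont : ContinuousOn (·⁻¹ : ℝ → ℝ) (spectrum ℝ A) := A.finite_real_spectrum.continuousOn _
  -- `x * x⁻¹ * x = x` holds also at `x = 0`, thanks to the convention `0⁻¹ = 0`
  refine ⟨cfc (·⁻¹ : ℝ → ℝ) A, ?_⟩
  calc A * cfc (·⁻¹ : ℝ → ℝ) A * A = cfc (fun x : ℝ => x * x⁻¹ * x) A := by
        rw [cfc_mul .., cfc_mul .., cfc_id' ℝ A]
    _ = cfc (fun x : ℝ => x) A := cfc_congr fun x _ => by by_cases hx : x = 0 <;> simp [hx]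
    _ = A := cfc_id' ℝ A

lemma PosSemidef.trace_mul_eq_trace_sqrt_mul_mul_sqrt {A : Matrix n n 𝕜} (hA : A.PosSemidef)
    (B : Matrix n n 𝕜) : (A * B).trace = (CFC.sqrt A * B * CFC.sqrt A).trace := by
  conv_lhs => rw [← CFC.sqrt_mul_sqrt_self A hA.nonneg]
  rw [mul_assoc, trace_mul_comm, mul_assoc]

lemma PosSemidef.sqrt_mul_mul_sqrt {B : Matrix n n 𝕜} (hB : B.PosSemidef) (A : Matrix n n 𝕜) :
    (CFC.sqrt A * B * CFC.sqrt A).PosSemidef := by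
  simpa [(nonneg_iff_posSemidef.mp (CFC.sqrt_nonneg A)).1.eq] using
    hB.mul_mul_conjTranspose_same (CFC.sqrt A)

lemma PosSemidef.trace_mul_nonneg {A B : Matrix n n 𝕜} (hA : A.PosSemidef) (hB : B.PosSemidef) :
    0 ≤ (A * B).trace := by
  rw [hA.trace_mul_eq_trace_sqrt_mul_mul_sqrt]
  exact (hB.sqrt_mul_mul_sqrt A).trace_nonneg

lemma PosSemidef.trace_mul_eq_zero_iff {A B : Matrix n n 𝕜} (hA : A.PosSemidef)
    (hB : B.PosSemidef) : (A * B).trace = 0 ↔ A * B = 0 := by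
  refine ⟨fun h => ?_, fun h => by rw [h, trace_zero]⟩
  set S := CFC.sqrt A
  set T := CFC.sqrt B
  have hS : Sᴴ = S := (nonneg_iff_posSemidef.mp (CFC.sqrt_nonneg A)).1.eq
  have hT : Tᴴ = T := (nonneg_iff_posSemidef.mp (CFC.sqrt_nonneg B)).1.eq
  have hSBS : S * B * S = 0 := by
    rwa [hA.trace_mul_eq_trace_sqrt_mul_mul_sqrt, (hB.sqrt_mul_mul_sqrt A).trace_eq_zero_iff] at h
  have hTS : T * S = 0 := by
    rw [← conjTranspose_mul_self_eq_zero, conjTranspose_mul, hS, hT, ← hSBS,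
      ← CFC.sqrt_mul_sqrt_self B hB.nonneg]
    noncomm_ring
  have hST : S * T = 0 := by
    rw [← conjTranspose_conjTranspose (S * T), conjTranspose_mul, hS, hT, hTS, conjTranspose_zero]
  rw [← CFC.sqrt_mul_sqrt_self A hA.nonneg, ← CFC.sqrt_mul_sqrt_self B hB.nonneg]
  calc S * S * (T * T) = S * (S * T) * T := by noncomm_ring
    _ = 0 := by rw [hST, mul_zero, zero_mul]

end Matrix

open Matrix

section Eigenvalues

variable {d : ℕ} {A : Matrix (Fin d) (Fin d) ℂ}

lemma eigs_eq_eigenvalues (hA : A.IsHermitian) : eigs A = hA.eigenvalues := dif_pos hA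

lemma eigs_le_lamMax (i : Fin d) : eigs A i ≤ lamMax A :=
  le_ciSup (Set.finite_range _).bddAbove i

lemma lamMin_le_eigs (i : Fin d) : lamMin A ≤ eigs A i :=
  ciInf_le (Set.finite_range _).bddBelow i

lemma lamMin_le_lamMax (A : Matrix (Fin d) (Fin d) ℂ) : lamMin A ≤ lamMax A := by
  rcases isEmpty_or_nonempty (Fin d) with _ | ⟨⟨i⟩⟩
  · simp [lamMin, lamMax]
  · exact (lamMin_le_eigs i).trans (eigs_le_lamMax i)

lemma le_lamMax_smul_one (hA : A.IsHermitian) : A ≤ (lamMax A : ℂ) • 1 := by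
  rw [← algebraMap_real_eq_smul_one]
  refine le_algebraMap_of_spectrum_le (fun x hx => ?_) hA.isSelfAdjoint
  obtain ⟨i, rfl⟩ := hA.spectrum_real_eq_range_eigenvalues ▸ hx
  exact eigs_eq_eigenvalues hA ▸ eigs_le_lamMax i

lemma lamMin_smul_one_le (hA : A.IsHermitian) : (lamMin A : ℂ) • 1 ≤ A := by
  rw [← algebraMap_real_eq_smul_one]
  refine algebraMap_le_of_le_spectrum (fun x hx => ?_) hA.isSelfAdjoint
  obtain ⟨i, rfl⟩ := hA.spectrum_real_eq_range_eigenvalues ▸ hx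
  exact eigs_eq_eigenvalues hA ▸ lamMin_le_eigs i

lemma exists_eq_smul_one_iff (hA : A.IsHermitian) :
    (∃ c : ℝ, A = (c : ℂ) • 1) ↔ lamMax A = lamMin A := by
  refine ⟨?_, fun h => ⟨lamMax A, le_antisymm (le_lamMax_smul_one hA) (h ▸ lamMin_smul_one_le hA)⟩⟩
  rintro ⟨c, rfl⟩
  rcases isEmpty_or_nonempty (Fin d) with _ | _
  · simp [lamMin, lamMax]
  have heigs : eigs ((c : ℂ) • 1 : Matrix (Fin d) (Fin d) ℂ) = fun _ => c := by
    funext i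
    have hi : eigs ((c : ℂ) • 1 : Matrix (Fin d) (Fin d) ℂ) i ∈
        spectrum ℝ (algebraMap ℝ (Matrix (Fin d) (Fin d) ℂ) c) := by
      rw [eigs_eq_eigenvalues hA, algebraMap_real_eq_smul_one]
      exact hA.eigenvalues_mem_spectrum_real i
    rwa [spectrum.scalar_eq] at hi
  rw [lamMax, lamMin, heigs, ciSup_const, ciInf_const]

end Eigenvalues

lemma traceNorm_eq_re_trace_abs {d : ℕ} {A : Matrix (Fin d) (Fin d) ℂ} (hA : A.IsHermitian) :
    traceNorm A = (CFC.abs A).trace.re := by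
  rw [CFC.abs_eq_cfc_norm A hA.isSelfAdjoint, hA.trace_cfc, traceNorm, eigs_eq_eigenvalues hA,
    Complex.re_sum]
  simp

lemma traceNorm_eq_re_trace_add {d : ℕ} {Δ Δp Δn : Matrix (Fin d) (Fin d) ℂ}
    (hΔp : Δp.PosSemidef) (hΔn : Δn.PosSemidef) (hJordan : Δ = Δp - Δn) (hOrth : Δp * Δn = 0) :
    traceNorm Δ = (Δp + Δn).trace.re := by
  have hΔ : Δ.IsHermitian := hJordan ▸ hΔp.1.sub hΔn.1
  obtain ⟨hpos, hneg⟩ := CFC.posPart_negPart_unique hJordan hOrth hΔp.nonneg hΔn.nonneg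
  rw [traceNorm_eq_re_trace_abs hΔ, ← CFC.posPart_add_negPart Δ hΔ.isSelfAdjoint, hpos, hneg]

namespace IsSupportProj

variable {d : ℕ} {P ρ M L : Matrix (Fin d) (Fin d) ℂ}

lemma mul_eq_zero_of_mul_eq_zero (hP : IsSupportProj P ρ) (hρ : ρ.IsHermitian)
    (h : M * ρ = 0) : M * P = 0 := by
  -- the columns of `1 - G * ρ` lie in `ker ρ ⊆ ker P`, so `P = P * G * ρ`, i.e. `P = ρ * Gᴴ * P`
  obtain ⟨hPh, -, -, hker⟩ := hP
  obtain ⟨G, hG⟩ := hρ.exists_mul_mul_eq_self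
  have hPGρ : P = P * G * ρ := by
    refine sub_eq_zero.mp (ext_iff_mulVec.mpr fun x => ?_)
    rw [zero_mulVec, ← mul_one P, mul_assoc, mul_assoc, ← mul_sub, one_mul, ← mulVec_mulVec]
    refine hker _ ?_
    rw [mulVec_mulVec, mul_sub, mul_one, ← mul_assoc, hG, sub_self, zero_mulVec]
  have hρGP : P = ρ * Gᴴ * P := by
    conv_lhs => rw [← hPh.eq, hPGρ]
    rw [conjTranspose_mul, conjTranspose_mul, hPh.eq, hρ.eq, mul_assoc]
  rw [hρGP, ← mul_assoc, ← mul_assoc, h, zero_mul, zero_mul]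

lemma trace_mul_eq_zero_iff (hP : IsSupportProj P ρ) (hρ : ρ.PosSemidef) (hM : M.PosSemidef) :
    (M * ρ).trace = 0 ↔ P * M * P = 0 := by
  refine ⟨fun h => ?_, fun h => ?_⟩
  · rw [mul_assoc, hP.mul_eq_zero_of_mul_eq_zero hρ.1 ((hM.trace_mul_eq_zero_iff hρ).mp h),
      mul_zero]
  · have hρP : ρ * P = ρ := by
      rw [← hρ.1.eq, ← hP.1.eq, ← conjTranspose_mul, hP.2.2.1]
    have hPρP : P * ρ * P = ρ := by rw [mul_assoc, hρP, hP.2.2.1]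
    calc (M * ρ).trace = (M * P * ρ * P).trace := by
          conv_lhs => rw [← hPρP]
          simp only [mul_assoc]
      _ = (P * M * P * ρ).trace := by rw [trace_mul_comm]; simp only [mul_assoc]
      _ = 0 := by rw [h, zero_mul, trace_zero]

lemma re_trace_mul_le (hP : IsSupportProj P ρ) (hρ : ρ.PosSemidef) {a : ℝ}
    (hL : L ≤ (a : ℂ) • 1) :
    (L * ρ).trace.re ≤ a * ρ.trace.re ∧
      ((L * ρ).trace.re = a * ρ.trace.re ↔ P * L * P = (a : ℂ) • P) := by
  have hM : ((a : ℂ) • 1 - L).PosSemidef := hL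
  have htr : (((a : ℂ) • 1 - L) * ρ).trace = a * ρ.trace - (L * ρ).trace := by
    rw [sub_mul, smul_mul, one_mul, trace_sub, trace_smul, smul_eq_mul]
  have hPMP : P * ((a : ℂ) • 1 - L) * P = (a : ℂ) • P - P * L * P := by
    rw [mul_sub, sub_mul, Matrix.mul_smul, mul_one, Matrix.smul_mul, hP.2.1]
  obtain ⟨hre, him⟩ := Complex.nonneg_iff.mp (hM.trace_mul_nonneg hρ)
  rw [htr] at hre him
  simp only [Complex.sub_re, Complex.sub_im, Complex.re_ofReal_mul, Complex.im_ofReal_mul]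
    at hre him
  refine ⟨by linarith, ?_⟩
  have key := hP.trace_mul_eq_zero_iff hρ hM
  rw [hPMP, sub_eq_zero, htr, Complex.ext_iff] at key
  simp only [Complex.sub_re, Complex.sub_im, Complex.re_ofReal_mul, Complex.im_ofReal_mul,
    Complex.zero_re, Complex.zero_im] at key
  rw [eq_comm (a := P * L * P), ← key]
  constructor
  · intro h; constructor <;> linarith
  · intro h; linarith [h.1]

lemma le_re_trace_mul (hP : IsSupportProj P ρ) (hρ : ρ.PosSemidef) {a : ℝ}
    (hL : (a : ℂ) • 1 ≤ L) :
    a * ρ.trace.re ≤ (L * ρ).trace.re ∧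
      ((L * ρ).trace.re = a * ρ.trace.re ↔ P * L * P = (a : ℂ) • P) := by
  have hneg : -L ≤ ((-a : ℝ) : ℂ) • 1 := by simpa using neg_le_neg hL
  obtain ⟨hle, heq⟩ := hP.re_trace_mul_le hρ hneg
  simp only [Matrix.mul_neg, trace_neg, Complex.neg_re, Complex.ofReal_neg,
    neg_smul, neg_mul, neg_inj] at hle heq
  exact ⟨by linarith, heq⟩

end IsSupportProj

theorem trace_mul_le_of_traceless_general
    {d : ℕ} (ε : ℝ) (Δ L Δp Δn Pp Pn : Matrix (Fin d) (Fin d) ℂ)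
    (hL : L.IsHermitian)
    (htr : Δ.trace = 0) (hball : (1 / 2 : ℝ) * traceNorm Δ ≤ ε)
    (hΔp : Δp.PosSemidef) (hΔn : Δn.PosSemidef)
    (hJordan : Δ = Δp - Δn) (hOrth : Δp * Δn = 0)
    (hPp : IsSupportProj Pp Δp) (hPn : IsSupportProj Pn Δn) :
    ((L * Δ).trace).re ≤ ε * (lamMax L - lamMin L) ∧
    (((L * Δ).trace).re = ε * (lamMax L - lamMin L) ↔
      (((1 / 2 : ℝ) * traceNorm Δ = ε ∨
          ∃ c : ℝ, L = (c : ℂ) • (1 : Matrix (Fin d) (Fin d) ℂ)) ∧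
       Pp * L * Pp = ((lamMax L : ℂ) • Pp) ∧
       Pn * L * Pn = ((lamMin L : ℂ) • Pn))) := by
  have hsplit : (L * Δ).trace.re = (L * Δp).trace.re - (L * Δn).trace.re := by
    rw [hJordan, mul_sub, trace_sub, Complex.sub_re]
  have htn : Δn.trace.re = Δp.trace.re := by
    rw [hJordan, trace_sub, sub_eq_zero] at htr
    rw [htr]
  have hhalf : (1 / 2 : ℝ) * traceNorm Δ = Δp.trace.re := by
    rw [traceNorm_eq_re_trace_add hΔp hΔn hJordan hOrth, trace_add, Complex.add_re, htn]
    ring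
  obtain ⟨hup, hup_eq⟩ := hPp.re_trace_mul_le hΔp (le_lamMax_smul_one hL)
  obtain ⟨hlow, hlow_eq⟩ := hPn.le_re_trace_mul hΔn (lamMin_smul_one_le hL)
  rw [htn] at hlow hlow_eq
  rw [hsplit, hhalf, exists_eq_smul_one_iff hL, ← hup_eq, ← hlow_eq]
  exact sub_le_mul_sub_and_eq_iff hup hlow (hhalf ▸ hball) (lamMin_le_lamMax L)

/-- For traceless Hermitian `Δ` with `(1/2)‖Δ‖₁ ≤ ε` and Hermitian `L`,
`tr(LΔ) ≤ ε(λ₊(L) − λ₋(L))`, with the stated equality conditions in terms of the Jordan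
decomposition `Δ = Δ₊ − Δ₋` and the support projections `π₊, π₋`. -/
theorem trace_mul_le_of_traceless
    {d : ℕ} (ε : ℝ) (hε : 0 < ε) (Δ L Δp Δn Pp Pn : Matrix (Fin d) (Fin d) ℂ)
    (hΔ : Δ.IsHermitian) (hL : L.IsHermitian)
    (htr : Δ.trace = 0) (hball : (1 / 2 : ℝ) * traceNorm Δ ≤ ε)
    (hΔp : Δp.PosSemidef) (hΔn : Δn.PosSemidef)
    (hJordan : Δ = Δp - Δn) (hOrth : Δp * Δn = 0)
    (hPp : IsSupportProj Pp Δp) (hPn : IsSupportProj Pn Δn) :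
    ((L * Δ).trace).re ≤ ε * (lamMax L - lamMin L) ∧
    (((L * Δ).trace).re = ε * (lamMax L - lamMin L) ↔
      (((1 / 2 : ℝ) * traceNorm Δ = ε ∨
          ∃ c : ℝ, L = (c : ℂ) • (1 : Matrix (Fin d) (Fin d) ℂ)) ∧
       Pp * L * Pp = ((lamMax L : ℂ) • Pp) ∧
       Pn * L * Pn = ((lamMin L : ℂ) • Pn))) :=
  trace_mul_le_of_traceless_general ε Δ L Δp Δn Pp Pn hL htr hball hΔp hΔn hJordan hOrth hPp hPn
end
end
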